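/- arXiv:1607.06801 — 4 statements merged into one kernel-verified Lean document; each statement's English description precedes it below -/
import Mathlib

section
/- Suppose the outcomes follow the linear model Y_i = c^(W_i) + X_i·β^(W_i) + ε_i, the regression scheme is centered, and n₀, n₁ ≥ 1. Then τ̂ − τ̄ = ε̄^(1) − ε̄^(0) − (X̄₁ − X̄₀)·(β̂̄ − β̄), where ε̄^(w) = (1/n_w)Σ_{i : W_i = w} ε_i, β̄ = (n₁β^(0) + n₀β^(1))/n, and β̂̄ = (n₁β̂^(0) + n₀β̂^(1))/n. -/
/-!
Averaging the linear model over treatment group `w` and comparing with the centering condition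
gives `ĉ⁽ʷ⁾ − c⁽ʷ⁾ = ε̄⁽ʷ⁾ − X̄_w·(β̂⁽ʷ⁾ − β⁽ʷ⁾)`. Substituting this into `τ̂ − τ̄` and writing the
pooled mean as the convex combination `X̄ = (n₀X̄₀ + n₁X̄₁)/n`, the remaining terms collapse to
`−(X̄₁ − X̄₀)·(n₀(β̂⁽¹⁾ − β⁽¹⁾) + n₁(β̂⁽⁰⁾ − β⁽⁰⁾))/n`, which is `−(X̄₁ − X̄₀)·(β̂̄ − β̄)`.
-/

open Finset

section Averages

variable {ι κ γ K : Type*} [Field K] [CharZero K]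

theorem sum_card_filter_div_card [Fintype γ] [DecidableEq γ] {s : Finset ι} (hs : s.Nonempty)
    (g : ι → γ) : ∑ w, (#{i ∈ s | g i = w} : K) / #s = 1 := by
  rw [← sum_div, ← Nat.cast_sum, ← card_eq_sum_card_fiberwise fun _ _ => mem_univ _, div_self]
  simpa using hs.ne_empty

/-- Via `x / 0 = 0`, an empty group contributes `0 / #s * (0 / 0) = 0`. -/
theorem sum_div_card_eq_sum_card_div_mul_mean [Fintype γ] [DecidableEq γ]
    (s : Finset ι) (g : ι → γ) (f : ι → K) :
    (∑ i ∈ s, f i) / #s = ∑ w, (#{i ∈ s | g i = w} : K) / #s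
      * ((∑ i ∈ s with g i = w, f i) / #{i ∈ s | g i = w}) := by
  rw [← sum_fiberwise s g f, sum_div]
  refine sum_congr rfl fun w _ => ?_
  by_cases hw : ({i ∈ s | g i = w} : Finset ι) = ∅
  · simp [hw]
  · have : (#{i ∈ s | g i = w} : K) ≠ 0 := by simpa using hw
    field_simp

theorem mean_eq_of_linear_model [Fintype κ] {s : Finset ι} (hs : s.Nonempty)
    {X : ι → κ → K} {Y ε : ι → K} {c : K} {β : κ → K}
    (hY : ∀ i ∈ s, Y i = c + X i ⬝ᵥ β + ε i)
    {xbar : κ → K} (hxbar : ∀ j, xbar j = (∑ i ∈ s, X i j) / #s) :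
    (∑ i ∈ s, Y i) / #s = c + xbar ⬝ᵥ β + (∑ i ∈ s, ε i) / #s := by
  have hs' : (#s : K) ≠ 0 := by simpa using hs.ne_empty
  have hXβ : xbar ⬝ᵥ β = (∑ i ∈ s, X i ⬝ᵥ β) / #s := by
    simp only [dotProduct, hxbar, div_mul_eq_mul_div, ← sum_div, sum_mul]
    rw [sum_comm]
  rw [sum_congr rfl hY, sum_add_distrib, sum_add_distrib, sum_const, nsmul_eq_mul, hXβ]
  field_simp

theorem intercept_sub_eq_of_centered [Fintype κ] {s : Finset ι} (hs : s.Nonempty)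
    {X : ι → κ → K} {Y ε : ι → K} {c chat : K} {β βhat : κ → K}
    (hY : ∀ i ∈ s, Y i = c + X i ⬝ᵥ β + ε i)
    {xbar : κ → K} (hxbar : ∀ j, xbar j = (∑ i ∈ s, X i j) / #s)
    (hcentered : (∑ i ∈ s, Y i) / #s = xbar ⬝ᵥ βhat + chat) :
    chat - c = (∑ i ∈ s, ε i) / #s - xbar ⬝ᵥ (βhat - β) := by
  rw [mean_eq_of_linear_model hs hY hxbar] at hcentered
  rw [dotProduct_sub]
  linear_combination -hcentered

end Averages

theorem convex_dotProduct_sub_add_eq {κ R : Type*} [Fintype κ] [CommRing R] {a₀ a₁ : R}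
    (ha : a₀ + a₁ = 1) (x₀ x₁ d₀ d₁ : κ → R) :
    (a₀ • x₀ + a₁ • x₁) ⬝ᵥ (d₁ - d₀) - x₁ ⬝ᵥ d₁ + x₀ ⬝ᵥ d₀
      = -((x₁ - x₀) ⬝ᵥ (a₀ • d₁ + a₁ • d₀)) := by
  obtain rfl : a₀ = 1 - a₁ := by linear_combination ha
  simp only [add_dotProduct, sub_dotProduct, dotProduct_add, dotProduct_sub, smul_dotProduct,
    dotProduct_smul, smul_eq_mul]
  ring

/-- Under the linear model Y_i = c⁽ᵂⁱ⁾ + X_i·β⁽ᵂⁱ⁾ + ε_i, if the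
regression scheme is centered and both groups are nonempty, then
τ̂ − τ̄ = ε̄⁽¹⁾ − ε̄⁽⁰⁾ − (X̄₁ − X̄₀)·(β̂̄ − β̄), where β̄ = (n₁β⁽⁰⁾ + n₀β⁽¹⁾)/n and
β̂̄ = (n₁β̂⁽⁰⁾ + n₀β̂⁽¹⁾)/n. -/
theorem stmt_1 (n p : ℕ) (X : Fin n → Fin p → ℝ) (W : Fin n → Fin 2)
    (c : Fin 2 → ℝ) (beta : Fin 2 → Fin p → ℝ) (eps : Fin n → ℝ) (Y : Fin n → ℝ)
    (hY : ∀ i, Y i = c (W i) + (∑ j, X i j * beta (W i) j) + eps i)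
    (chat : Fin 2 → ℝ) (bhat : Fin 2 → Fin p → ℝ)
    (nw : Fin 2 → ℕ) (hnw : ∀ w, nw w = (univ.filter fun i => W i = w).card)
    (hpos : ∀ w, 1 ≤ nw w)
    (Xbar : Fin p → ℝ) (hXbar : ∀ j, Xbar j = (∑ i, X i j) / n)
    (Xbarw : Fin 2 → Fin p → ℝ)
    (hXbarw : ∀ w j, Xbarw w j = (∑ i ∈ univ.filter fun i => W i = w, X i j) / nw w)
    (Ybarw : Fin 2 → ℝ)
    (hYbarw : ∀ w, Ybarw w = (∑ i ∈ univ.filter fun i => W i = w, Y i) / nw w)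
    (hcentered : ∀ w, Ybarw w = (∑ j, Xbarw w j * bhat w j) + chat w)
    (epsbar : Fin 2 → ℝ)
    (hepsbar : ∀ w, epsbar w = (∑ i ∈ univ.filter fun i => W i = w, eps i) / nw w)
    (betabar bhatbar : Fin p → ℝ)
    (hbetabar : ∀ j, betabar j = ((nw 1 : ℝ) * beta 0 j + (nw 0 : ℝ) * beta 1 j) / n)
    (hbhatbar : ∀ j, bhatbar j = ((nw 1 : ℝ) * bhat 0 j + (nw 0 : ℝ) * bhat 1 j) / n)
    (tauhat taubar : ℝ)
    (htauhat : tauhat = (∑ j, Xbar j * (bhat 1 j - bhat 0 j)) + chat 1 - chat 0)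
    (htaubar : taubar = (∑ j, Xbar j * (beta 1 j - beta 0 j)) + c 1 - c 0) :
    tauhat - taubar
      = epsbar 1 - epsbar 0
        - ∑ j, (Xbarw 1 j - Xbarw 0 j) * (bhatbar j - betabar j) := by
  simp only [hnw] at hXbarw hYbarw hepsbar
  have hgroup (w : Fin 2) : (univ.filter fun i => W i = w).Nonempty :=
    card_pos.mp (hnw w ▸ hpos w)
  have hintercept (w : Fin 2) :
      chat w - c w = epsbar w - Xbarw w ⬝ᵥ (bhat w - beta w) := by
    rw [hepsbar]
    refine intercept_sub_eq_of_centered (hgroup w) (fun i hi => ?_) (hXbarw w)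
      ((hYbarw w).symm.trans (hcentered w))
    rw [hY i, (mem_filter.mp hi).2]
    rfl
  have hweights : (nw 0 : ℝ) / n + nw 1 / n = 1 := by
    simpa [Fin.sum_univ_two, hnw] using
      sum_card_filter_div_card (K := ℝ) ((hgroup 0).mono (filter_subset _ _)) W
  have hpooled : Xbar = ((nw 0 : ℝ) / n) • Xbarw 0 + ((nw 1 : ℝ) / n) • Xbarw 1 := by
    funext j
    simpa [hXbar, hXbarw, hnw] using sum_div_card_eq_sum_card_div_mul_mean univ W (X · j)
  have hbar : bhatbar - betabar
      = ((nw 0 : ℝ) / n) • (bhat 1 - beta 1) + ((nw 1 : ℝ) / n) • (bhat 0 - beta 0) := by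
    funext j
    simp only [Pi.sub_apply, Pi.add_apply, Pi.smul_apply, smul_eq_mul, hbhatbar, hbetabar]
    ring
  calc tauhat - taubar
      = epsbar 1 - epsbar 0 + (Xbar ⬝ᵥ ((bhat 1 - beta 1) - (bhat 0 - beta 0))
          - Xbarw 1 ⬝ᵥ (bhat 1 - beta 1) + Xbarw 0 ⬝ᵥ (bhat 0 - beta 0)) := by
        rw [htauhat, htaubar]
        change Xbar ⬝ᵥ (bhat 1 - bhat 0) + chat 1 - chat 0
          - (Xbar ⬝ᵥ (beta 1 - beta 0) + c 1 - c 0) = _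
        simp only [dotProduct_sub] at hintercept ⊢
        linear_combination hintercept 1 - hintercept 0
    _ = epsbar 1 - epsbar 0 - (Xbarw 1 - Xbarw 0) ⬝ᵥ (bhatbar - betabar) := by
        rw [hpooled, convex_dotProduct_sub_add_eq hweights, hbar]
        ring
end

section
/- Fix a fold F ⊆ {1, …, n} of size n^(k), with treatment counts n₀^(k), n₁^(k) ≥ 1 inside F, and fixed vectors β̂^(0,−k), β̂^(1,−k) ∈ ℝ^p. Then the cross-estimation fold estimator satisfies the identity τ̂^(k) = (1/n₁^(k)) Σ_{i ∈ F : W_i = 1} (Y_i − X_i·β̂̄^(−k)) − (1/n₀^(k)) Σ_{i ∈ F : W_i = 0} (Y_i − X_i·β̂̄^(−k)), where β̂̄^(−k) = (n₁^(k) β̂^(0,−k) + n₀^(k) β̂^(1,−k))/n^(k). -/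
/-!
The pooled mean is the count-weighted average of the two group means, so
`X̄ - X̄₁ = n₀ (X̄₀ - X̄₁) / n` and `X̄ - X̄₀ = n₁ (X̄₁ - X̄₀) / n`. Collecting the two
`β̂` terms therefore gives `(X̄₀ - X̄₁) · β̂̄`, which moves into the two group averages.
With Lean's convention `x / 0 = 0` the identity even survives an empty treatment group.
-/

lemma sum_filter_eq_zero_add_sum_filter_eq_one {ι M : Type*} [AddCommMonoid M]
    (s : Finset ι) (W : ι → Fin 2) (f : ι → M) :
    ∑ i ∈ s with W i = 0, f i + ∑ i ∈ s with W i = 1, f i = ∑ i ∈ s, f i := by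
  rw [← Finset.sum_fiberwise s W f, Fin.sum_univ_two]

lemma sum_sub_sum_mul {ι κ R : Type*} [Fintype κ] [CommRing R]
    (s : Finset ι) (Y : ι → R) (X : ι → κ → R) (b : κ → R) :
    ∑ i ∈ s, (Y i - ∑ j, X i j * b j) = ∑ i ∈ s, Y i - ∑ j, (∑ i ∈ s, X i j) * b j := by
  rw [Finset.sum_sub_distrib, Finset.sum_comm]
  simp only [Finset.sum_mul]

lemma pooled_mean_adjustment {K : Type*} [Field K] [CharZero K] (n₀ n₁ : ℕ)
    (S₀ S₁ b₀ b₁ : K) (h₀ : n₀ = 0 → S₀ = 0) (h₁ : n₁ = 0 → S₁ = 0) :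
    ((S₀ + S₁) / (n₀ + n₁) - S₁ / n₁) * b₁ - ((S₀ + S₁) / (n₀ + n₁) - S₀ / n₀) * b₀
      = (S₀ / n₀ - S₁ / n₁) * ((n₁ * b₀ + n₀ * b₁) / (n₀ + n₁)) := by
  by_cases hn : (n₀ + n₁ : K) = 0
  · obtain ⟨rfl, rfl⟩ : n₀ = 0 ∧ n₁ = 0 := Nat.add_eq_zero_iff.mp (by exact_mod_cast hn)
    simp [h₀ rfl, h₁ rfl]
  have hS₀ : S₀ = n₀ * (S₀ / n₀) := (mul_div_cancel_of_imp' (by exact_mod_cast h₀)).symm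
  have hS₁ : S₁ = n₁ * (S₁ / n₁) := (mul_div_cancel_of_imp' (by exact_mod_cast h₁)).symm
  generalize S₀ / n₀ = A₀ at hS₀ ⊢
  generalize S₁ / n₁ = A₁ at hS₁ ⊢
  subst hS₀ hS₁
  field_simp
  ring

theorem stmt_9_general (n p : ℕ) (F : Finset (Fin n))
    (X : Fin n → Fin p → ℝ) (Y : Fin n → ℝ) (W : Fin n → Fin 2)
    (bhat : Fin 2 → Fin p → ℝ)
    (nk : ℕ) (hnk : nk = F.card)
    (nkw : Fin 2 → ℕ) (hnkw : ∀ w, nkw w = (F.filter fun i => W i = w).card)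
    (Xbark : Fin p → ℝ) (hXbark : ∀ j, Xbark j = (∑ i ∈ F, X i j) / nk)
    (Xbarkw : Fin 2 → Fin p → ℝ)
    (hXbarkw : ∀ w j, Xbarkw w j = (∑ i ∈ F.filter fun i => W i = w, X i j) / nkw w)
    (Ybarkw : Fin 2 → ℝ)
    (hYbarkw : ∀ w, Ybarkw w = (∑ i ∈ F.filter fun i => W i = w, Y i) / nkw w)
    (bhatbar : Fin p → ℝ)
    (hbhatbar : ∀ j, bhatbar j = ((nkw 1 : ℝ) * bhat 0 j + (nkw 0 : ℝ) * bhat 1 j) / nk)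
    (tauhatk : ℝ)
    (htauhatk : tauhatk
      = Ybarkw 1 - Ybarkw 0 + (∑ j, (Xbark j - Xbarkw 1 j) * bhat 1 j)
        - ∑ j, (Xbark j - Xbarkw 0 j) * bhat 0 j) :
    tauhatk
      = (∑ i ∈ F.filter fun i => W i = 1, (Y i - ∑ j, X i j * bhatbar j)) / nkw 1
        - (∑ i ∈ F.filter fun i => W i = 0, (Y i - ∑ j, X i j * bhatbar j)) / nkw 0 := by
  have hcard : (nk : ℝ) = nkw 0 + nkw 1 := by
    rw [← Nat.cast_add, hnk, hnkw, hnkw, Finset.card_eq_sum_ones, Finset.card_eq_sum_ones,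
      Finset.card_eq_sum_ones, sum_filter_eq_zero_add_sum_filter_eq_one]
  have hempty : ∀ w j, nkw w = 0 → ∑ i ∈ F with W i = w, X i j = 0 := fun w j h => by
    rw [Finset.card_eq_zero.mp ((hnkw w).symm.trans h), Finset.sum_empty]
  have hadjust : ∀ j, (Xbark j - Xbarkw 1 j) * bhat 1 j - (Xbark j - Xbarkw 0 j) * bhat 0 j
      = (Xbarkw 0 j - Xbarkw 1 j) * bhatbar j := fun j => by
    rw [hXbark, hXbarkw, hXbarkw, hbhatbar, hcard,
      ← sum_filter_eq_zero_add_sum_filter_eq_one F W, pooled_mean_adjustment _ _ _ _ _ _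
        (hempty 0 j) (hempty 1 j)]
  rw [htauhatk, sum_sub_sum_mul, sum_sub_sum_mul, hYbarkw, hYbarkw, add_sub_assoc,
    ← Finset.sum_sub_distrib, Finset.sum_congr rfl fun j _ => hadjust j]
  simp only [hXbarkw, sub_mul, Finset.sum_sub_distrib, div_mul_eq_mul_div, ← Finset.sum_div]
  ring

/-- For a fold F with treatment counts n₀⁽ᵏ⁾, n₁⁽ᵏ⁾ ≥ 1 and fixed
out-of-fold estimates β̂⁽⁰'⁻ᵏ⁾, β̂⁽¹'⁻ᵏ⁾, the cross-estimation fold estimator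
τ̂⁽ᵏ⁾ = Ȳ₁⁽ᵏ⁾ − Ȳ₀⁽ᵏ⁾ + (X̄⁽ᵏ⁾ − X̄₁⁽ᵏ⁾)·β̂⁽¹'⁻ᵏ⁾ − (X̄⁽ᵏ⁾ − X̄₀⁽ᵏ⁾)·β̂⁽⁰'⁻ᵏ⁾ satisfies
τ̂⁽ᵏ⁾ = (1/n₁⁽ᵏ⁾)Σ_{i∈F:Wᵢ=1}(Yᵢ − Xᵢ·β̂̄⁽⁻ᵏ⁾) − (1/n₀⁽ᵏ⁾)Σ_{i∈F:Wᵢ=0}(Yᵢ − Xᵢ·β̂̄⁽⁻ᵏ⁾),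
with β̂̄⁽⁻ᵏ⁾ = (n₁⁽ᵏ⁾β̂⁽⁰'⁻ᵏ⁾ + n₀⁽ᵏ⁾β̂⁽¹'⁻ᵏ⁾)/n⁽ᵏ⁾. -/
theorem stmt_9 (n p : ℕ) (F : Finset (Fin n))
    (X : Fin n → Fin p → ℝ) (Y : Fin n → ℝ) (W : Fin n → Fin 2)
    (bhat : Fin 2 → Fin p → ℝ)
    (nk : ℕ) (hnk : nk = F.card)
    (nkw : Fin 2 → ℕ) (hnkw : ∀ w, nkw w = (F.filter fun i => W i = w).card)
    (hpos : ∀ w, 1 ≤ nkw w)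
    (Xbark : Fin p → ℝ) (hXbark : ∀ j, Xbark j = (∑ i ∈ F, X i j) / nk)
    (Xbarkw : Fin 2 → Fin p → ℝ)
    (hXbarkw : ∀ w j, Xbarkw w j = (∑ i ∈ F.filter fun i => W i = w, X i j) / nkw w)
    (Ybarkw : Fin 2 → ℝ)
    (hYbarkw : ∀ w, Ybarkw w = (∑ i ∈ F.filter fun i => W i = w, Y i) / nkw w)
    (bhatbar : Fin p → ℝ)
    (hbhatbar : ∀ j, bhatbar j = ((nkw 1 : ℝ) * bhat 0 j + (nkw 0 : ℝ) * bhat 1 j) / nk)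
    (tauhatk : ℝ)
    (htauhatk : tauhatk
      = Ybarkw 1 - Ybarkw 0 + (∑ j, (Xbark j - Xbarkw 1 j) * bhat 1 j)
        - ∑ j, (Xbark j - Xbarkw 0 j) * bhat 0 j) :
    tauhatk
      = (∑ i ∈ F.filter fun i => W i = 1, (Y i - ∑ j, X i j * bhatbar j)) / nkw 1
        - (∑ i ∈ F.filter fun i => W i = 0, (Y i - ∑ j, X i j * bhatbar j)) / nkw 0 :=
  stmt_9_general n p F X Y W bhat nk hnk nkw hnkw Xbark hXbark Xbarkw hXbarkw Ybarkw hYbarkw bhatbar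
    hbhatbar tauhatk htauhatk
end

section
/- Fix a fold of size n^(k) with a fixed treatment assignment having counts n₀^(k), n₁^(k) ≥ 1, and let the fold's samples (X_i, Y_i^(0), Y_i^(1)) be i.i.d. with finite second moments and independent of the estimators β̂^(0,−k), β̂^(1,−k) (which are measurable functions of data outside the fold). Then, conditionally on (β̂^(0,−k), β̂^(1,−k)), the variance of the fold estimator τ̂^(k) equals V_k = Σ_{w ∈ {0,1}} (1/n_w^(k)) · Var[Y^(w) − X·β̂̄^(−k) | β̂^(−k)], where β̂̄^(−k) = (n₁^(k) β̂^(0,−k) + n₀^(k) β̂^(1,−k))/n^(k) and (X, Y^(0), Y^(1)) is distributed as one fold sample. -/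
/-!
Expanding the fold averages, `τ̂⁽ᵏ⁾ = ∑ᵢ cᵢ (Yᵢ - Xᵢ · β̂̄)` with `cᵢ = 1/n₁` on treated and
`cᵢ = -1/n₀` on control units: the pooled slope `β̂̄ = (n₁ β̂⁽⁰⁾ + n₀ β̂⁽¹⁾)/n` is exactly the
combination that absorbs the full-fold mean `X̄⁽ᵏ⁾`. Since the fold samples are independent of the
estimators, conditioning on the estimators amounts to freezing them at a value `b` and integrating
over the law of the fold samples. For frozen `b` the summands are independent, and each of the
`n_w` summands of arm `w` contributes `Var[Y⁽ʷ⁾ - X · β̂̄] / n_w²`.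
-/

open MeasureTheory ProbabilityTheory Finset

namespace ProbabilityTheory

variable {Ω α β : Type*} [MeasurableSpace Ω] [MeasurableSpace α] [MeasurableSpace β]
  {μ : Measure Ω}

theorem IndepFun.memLp_two_mul {f g : Ω → ℝ} (h : IndepFun f g μ) (hf : MemLp f 2 μ)
    (hg : MemLp g 2 μ) : MemLp (f * g) 2 μ := by
  rw [memLp_two_iff_integrable_sq (hf.1.mul hg.1)]
  simp only [Pi.mul_apply, mul_pow]
  exact (h.comp (measurable_id.pow_const 2) (measurable_id.pow_const 2)).integrable_mul
    hf.integrable_sq hg.integrable_sq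

theorem iIndepFun.variance_sum_comp {ι : Type*} [Fintype ι] {Z : ι → Ω → α}
    (hind : iIndepFun Z μ) (hZ : ∀ i, Measurable (Z i)) {ν : Measure α}
    (hlaw : ∀ i, μ.map (Z i) = ν) {f : ι → α → ℝ} (hf : ∀ i, Measurable (f i))
    (hf2 : ∀ i, MemLp (fun ω => f i (Z i ω)) 2 μ) :
    Var[fun ω => ∑ i, f i (Z i ω); μ] = ∑ i, Var[f i; ν] := by
  calc Var[fun ω => ∑ i, f i (Z i ω); μ] = Var[∑ i, fun ω => f i (Z i ω); μ] := by
        simp only [Finset.sum_fn]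
    _ = ∑ i, Var[fun ω => f i (Z i ω); μ] :=
        IndepFun.variance_sum (fun i _ => hf2 i)
          fun i _ j _ hij => (hind.indepFun hij).comp (hf i) (hf j)
    _ = ∑ i, Var[f i; ν] := sum_congr rfl fun i _ => by
        rw [← hlaw i, variance_map (hf i).aemeasurable (hZ i).aemeasurable]
        rfl

variable [IsProbabilityMeasure μ] {S : Ω → α} {B : Ω → β}

theorem IndepFun.condExp_comp_ae_eq_integral_map (hSB : IndepFun S B μ) (hS : Measurable S)
    (hB : Measurable B) {φ : α → β → ℝ} (hφ : Measurable (Function.uncurry φ))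
    (hint : Integrable (fun ω => φ (S ω) (B ω)) μ) :
    μ[fun ω => φ (S ω) (B ω) | MeasurableSpace.comap B inferInstance]
      =ᵐ[μ] fun ω => ∫ s, φ s (B ω) ∂(μ.map S) := by
  have hSBm : Measurable fun ω => (S ω, B ω) := hS.prodMk hB
  have hmap : μ.map (fun ω => (S ω, B ω)) = (μ.map S).prod (μ.map B) :=
    (indepFun_iff_map_prod_eq_prod_map_map hS.aemeasurable hB.aemeasurable).mp hSB
  have hφint : Integrable (Function.uncurry φ) ((μ.map S).prod (μ.map B)) := by
    rwa [← hmap, integrable_map_measure hφ.aestronglyMeasurable hSBm.aemeasurable]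
  have hG : StronglyMeasurable fun b => ∫ s, φ s b ∂(μ.map S) :=
    hφ.stronglyMeasurable.integral_prod_left'
  refine (ae_eq_condExp_of_forall_setIntegral_eq hB.comap_le hint
    (fun s _ _ => (hφint.integral_prod_right.comp_measurable hB).integrableOn) ?_
    (hG.comp_measurable (Measurable.of_comap_le le_rfl)).aestronglyMeasurable).symm
  rintro _ ⟨t, ht, rfl⟩ -
  have hφint_t : Integrable (Function.uncurry φ) ((μ.map S).prod ((μ.map B).restrict t)) := by
    rw [← Measure.restrict_univ (μ := μ.map S), Measure.prod_restrict]
    exact hφint.restrict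
  calc ∫ ω in B ⁻¹' t, ∫ s, φ s (B ω) ∂(μ.map S) ∂μ
      = ∫ b in t, ∫ s, φ s b ∂(μ.map S) ∂(μ.map B) :=
        (setIntegral_map ht hG.aestronglyMeasurable hB.aemeasurable).symm
    _ = ∫ q, Function.uncurry φ q ∂((μ.map S).prod ((μ.map B).restrict t)) :=
        (integral_prod_symm _ hφint_t).symm
    _ = ∫ q in Set.univ ×ˢ t, Function.uncurry φ q ∂(μ.map fun ω => (S ω, B ω)) := by
        rw [hmap, ← Measure.prod_restrict, Measure.restrict_univ]
    _ = ∫ ω in B ⁻¹' t, φ (S ω) (B ω) ∂μ := by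
        rw [setIntegral_map (MeasurableSet.univ.prod ht) hφ.aestronglyMeasurable
          hSBm.aemeasurable, Set.mk_preimage_prod, Set.preimage_univ, Set.univ_inter]
        rfl

theorem IndepFun.condVar_comp_ae_eq_variance_map (hSB : IndepFun S B μ) (hS : Measurable S)
    (hB : Measurable B) {φ : α → β → ℝ} (hφ : Measurable (Function.uncurry φ))
    (hφ2 : MemLp (fun ω => φ (S ω) (B ω)) 2 μ) :
    Var[fun ω => φ (S ω) (B ω); μ | MeasurableSpace.comap B inferInstance]
      =ᵐ[μ] fun ω => Var[fun s => φ s (B ω); μ.map S] := by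
  set m : β → ℝ := fun b => ∫ s, φ s b ∂(μ.map S)
  have hm : Measurable m := hφ.stronglyMeasurable.integral_prod_left'.measurable
  have hmean := hSB.condExp_comp_ae_eq_integral_map hS hB hφ (hφ2.integrable one_le_two)
  have hsq : ((fun ω => φ (S ω) (B ω))
      - μ[fun ω => φ (S ω) (B ω) | MeasurableSpace.comap B inferInstance]) ^ 2
      =ᵐ[μ] fun ω => (φ (S ω) (B ω) - m (B ω)) ^ 2 := by
    filter_upwards [hmean] with ω hω
    simp only [Pi.pow_apply, Pi.sub_apply, hω, m]
  have hint : Integrable (fun ω => (φ (S ω) (B ω) - m (B ω)) ^ 2) μ :=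
    (hφ2.sub (hφ2.condExp one_le_two)).integrable_sq.congr hsq
  refine (condExp_congr_ae hsq).trans <|
    (hSB.condExp_comp_ae_eq_integral_map hS hB (φ := fun s b => (φ s b - m b) ^ 2)
      ((hφ.sub (hm.comp measurable_snd)).pow_const 2) hint).trans (ae_of_all _ fun ω => ?_)
  exact (variance_eq_integral hφ.of_uncurry_right.aemeasurable).symm

end ProbabilityTheory

noncomputable section Fold

variable {ι κ : Type*}

def armOutcome (g : Fin 2) (s : (κ → ℝ) × ℝ × ℝ) : ℝ :=
  if g = 1 then s.2.2 else s.2.1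

@[fun_prop]
theorem measurable_armOutcome (g : Fin 2) : Measurable (armOutcome (κ := κ) g) := by
  unfold armOutcome
  split_ifs <;> fun_prop

def armWeight (nw : Fin 2 → ℕ) (g : Fin 2) : ℝ :=
  if g = 1 then (nw 1 : ℝ)⁻¹ else -(nw 0 : ℝ)⁻¹

/-- `β̂̄⁽⁻ᵏ⁾` for `b = (β̂⁽⁰'⁻ᵏ⁾, β̂⁽¹'⁻ᵏ⁾)` on a fold of size `N`. -/
def pooledSlope (nw : Fin 2 → ℕ) (N : ℕ) (b : (κ → ℝ) × (κ → ℝ)) (j : κ) : ℝ :=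
  ((nw 1 : ℝ) * b.1 j + (nw 0 : ℝ) * b.2 j) / N

variable [Fintype κ]

def armResidual (g : Fin 2) (β : κ → ℝ) (s : (κ → ℝ) × ℝ × ℝ) : ℝ :=
  armOutcome g s - ∑ j, s.1 j * β j

theorem sum_sub_dot_eq_sum_sub_dot_sum (s : Finset ι) (Y : ι → ℝ) (X : ι → κ → ℝ)
    (β : κ → ℝ) :
    ∑ i ∈ s, (Y i - ∑ j, X i j * β j) = ∑ i ∈ s, Y i - ∑ j, (∑ i ∈ s, X i j) * β j := by
  simp only [sum_sub_distrib, sum_mul]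
  rw [sum_comm]

variable [Fintype ι]

/-- `τ̂⁽ᵏ⁾` in the form `∑ᵢ cᵢ (Yᵢ - Xᵢ · β̂̄)`, for fold samples `s i = (Xᵢ, Yᵢ⁽⁰⁾, Yᵢ⁽¹⁾)`. -/
def foldContrast (w : ι → Fin 2) (nw : Fin 2 → ℕ) (N : ℕ) (s : ι → (κ → ℝ) × ℝ × ℝ)
    (b : (κ → ℝ) × (κ → ℝ)) : ℝ :=
  ∑ i, armWeight nw (w i) * armResidual (w i) (pooledSlope nw N b) (s i)

variable (w : ι → Fin 2) {nw : Fin 2 → ℕ}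

theorem sum_eq_sum_filter_zero_add_sum_filter_one {M : Type*} [AddCommMonoid M] (f : ι → M) :
    ∑ i, f i = ∑ i with w i = 0, f i + ∑ i with w i = 1, f i := by
  rw [← sum_fiberwise univ w f, Fin.sum_univ_two]

theorem sum_armWeight_mul (f : ι → ℝ) :
    ∑ i, armWeight nw (w i) * f i
      = (∑ i with w i = 1, f i) / nw 1 - (∑ i with w i = 0, f i) / nw 0 := by
  have hfiber (g : Fin 2) : ∑ i with w i = g, armWeight nw (w i) * f i
      = armWeight nw g * ∑ i with w i = g, f i := by
    rw [mul_sum]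
    exact sum_congr rfl fun i hi => by rw [(mem_filter.1 hi).2]
  rw [sum_eq_sum_filter_zero_add_sum_filter_one w, hfiber, hfiber]
  simp only [armWeight, if_pos, Fin.zero_ne_one, if_false]
  ring

theorem sum_comp_eq_sum_card_mul (hnw : ∀ g, nw g = #{i | w i = g}) (f : Fin 2 → ℝ) :
    ∑ i, f (w i) = ∑ g, (nw g : ℝ) * f g := by
  simp only [← sum_fiberwise' univ w f, sum_const, hnw, nsmul_eq_mul]

theorem fold_estimator_eq_sum_armWeight_mul (hnw : ∀ g, nw g = #{i | w i = g})
    (hpos : ∀ g, 1 ≤ nw g) (Y : ι → ℝ) (X : ι → κ → ℝ) (b : (κ → ℝ) × (κ → ℝ)) :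
    (∑ i with w i = 1, Y i) / nw 1 - (∑ i with w i = 0, Y i) / nw 0
        + ∑ j, ((∑ i, X i j) / Fintype.card ι - (∑ i with w i = 1, X i j) / nw 1) * b.2 j
        - ∑ j, ((∑ i, X i j) / Fintype.card ι - (∑ i with w i = 0, X i j) / nw 0) * b.1 j
      = ∑ i, armWeight nw (w i) * (Y i - ∑ j, X i j * pooledSlope nw (Fintype.card ι) b j) := by
  have h0 : (nw 0 : ℝ) ≠ 0 := by have := hpos 0; positivity
  have h1 : (nw 1 : ℝ) ≠ 0 := by have := hpos 1; positivity
  have hN : (Fintype.card ι : ℝ) = nw 0 + nw 1 := by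
    simpa [hnw] using sum_eq_sum_filter_zero_add_sum_filter_one w fun _ => (1 : ℝ)
  have hN0 : (nw 0 : ℝ) + nw 1 ≠ 0 := by have := hpos 0; positivity
  have hcoord (j : κ) :
      ((∑ i, X i j) / Fintype.card ι - (∑ i with w i = 1, X i j) / nw 1) * b.2 j
        - ((∑ i, X i j) / Fintype.card ι - (∑ i with w i = 0, X i j) / nw 0) * b.1 j
      = (∑ i with w i = 0, X i j) * pooledSlope nw (Fintype.card ι) b j / nw 0
        - (∑ i with w i = 1, X i j) * pooledSlope nw (Fintype.card ι) b j / nw 1 := by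
    rw [pooledSlope, sum_eq_sum_filter_zero_add_sum_filter_one w, hN]
    field_simp
    ring
  have hsum := sum_congr rfl fun j (_ : j ∈ univ) => hcoord j
  rw [sum_sub_distrib, sum_sub_distrib, ← sum_div, ← sum_div] at hsum
  rw [sum_armWeight_mul, sum_sub_dot_eq_sum_sub_dot_sum, sum_sub_dot_eq_sum_sub_dot_sum]
  linear_combination hsum

theorem measurable_foldContrast (N : ℕ) :
    Measurable (Function.uncurry (foldContrast (κ := κ) w nw N)) := by
  unfold foldContrast armResidual pooledSlope
  fun_prop

variable {Ω : Type*} [MeasurableSpace Ω] {μ : Measure Ω}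

theorem memLp_armResidual (g : Fin 2) {Z : Ω → (κ → ℝ) × ℝ × ℝ} {β : Ω → κ → ℝ}
    (hY0 : MemLp (fun ω => (Z ω).2.1) 2 μ) (hY1 : MemLp (fun ω => (Z ω).2.2) 2 μ)
    (hXβ : ∀ j, MemLp (fun ω => (Z ω).1 j * β ω j) 2 μ) :
    MemLp (fun ω => armResidual g (β ω) (Z ω)) 2 μ := by
  refine MemLp.sub ?_ (memLp_finsetSum _ fun j _ => hXβ j)
  unfold armOutcome
  split_ifs
  exacts [hY1, hY0]

theorem memLp_foldContrast (N : ℕ) {S : Ω → ι → (κ → ℝ) × ℝ × ℝ}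
    {B : Ω → (κ → ℝ) × (κ → ℝ)} (hSB : IndepFun S B μ)
    (hX : ∀ i j, MemLp (fun ω => (S ω i).1 j) 2 μ) (hY0 : ∀ i, MemLp (fun ω => (S ω i).2.1) 2 μ)
    (hY1 : ∀ i, MemLp (fun ω => (S ω i).2.2) 2 μ) (hB0 : ∀ j, MemLp (fun ω => (B ω).1 j) 2 μ)
    (hB1 : ∀ j, MemLp (fun ω => (B ω).2 j) 2 μ) :
    MemLp (fun ω => foldContrast w nw N (S ω) (B ω)) 2 μ := by
  have hβ (j : κ) : MemLp (fun ω => pooledSlope nw N (B ω) j) 2 μ := by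
    simpa only [pooledSlope, div_eq_inv_mul, Pi.add_apply] using
      (((hB0 j).const_mul (nw 1 : ℝ)).add ((hB1 j).const_mul (nw 0 : ℝ))).const_mul (N : ℝ)⁻¹
  refine memLp_finsetSum _ fun i _ =>
    (memLp_armResidual (w i) (hY0 i) (hY1 i) fun j => ?_).const_mul _
  have hXβ : IndepFun (fun ω => (S ω i).1 j) (fun ω => pooledSlope nw N (B ω) j) μ :=
    hSB.comp (φ := fun s : ι → (κ → ℝ) × ℝ × ℝ => (s i).1 j) (ψ := fun b => pooledSlope nw N b j)
      (by fun_prop) (by unfold pooledSlope; fun_prop)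
  exact hXβ.memLp_two_mul (hX i j) (hβ j)

theorem variance_foldContrast (hnw : ∀ g, nw g = #{i | w i = g})
    {Z : ι → Ω → (κ → ℝ) × ℝ × ℝ} (hind : iIndepFun Z μ) (hZ : ∀ i, Measurable (Z i))
    {ν : Measure ((κ → ℝ) × ℝ × ℝ)} (hlaw : ∀ i, μ.map (Z i) = ν)
    (hX : ∀ i j, MemLp (fun ω => (Z i ω).1 j) 2 μ) (hY0 : ∀ i, MemLp (fun ω => (Z i ω).2.1) 2 μ)
    (hY1 : ∀ i, MemLp (fun ω => (Z i ω).2.2) 2 μ) (N : ℕ) (b : (κ → ℝ) × (κ → ℝ)) :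
    Var[fun ω => foldContrast w nw N (fun i => Z i ω) b; μ]
      = ∑ g, 1 / (nw g : ℝ) * Var[armResidual g (pooledSlope nw N b); ν] := by
  have hres (i : ι) : MemLp (fun ω => armResidual (w i) (pooledSlope nw N b) (Z i ω)) 2 μ :=
    memLp_armResidual (w i) (β := fun _ => pooledSlope nw N b) (hY0 i) (hY1 i)
      fun j => (hX i j).mul_const _
  refine (iIndepFun.variance_sum_comp hind hZ hlaw
    (f := fun i s => armWeight nw (w i) * armResidual (w i) (pooledSlope nw N b) s)
    (fun i => by unfold armResidual; fun_prop) fun i => (hres i).const_mul _).trans ?_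
  simp only [variance_const_mul]
  rw [sum_comp_eq_sum_card_mul w hnw fun g =>
    armWeight nw g ^ 2 * Var[armResidual g (pooledSlope nw N b); ν]]
  refine sum_congr rfl fun g _ => ?_
  rw [← mul_assoc]
  congr 1
  unfold armWeight
  split_ifs <;> grind

end Fold

/-- For a fold with fixed treatment assignment (both groups nonempty),
i.i.d. fold samples (Xᵢ, Yᵢ⁽⁰⁾, Yᵢ⁽¹⁾) with finite second moments, independent of the
out-of-fold estimators (β̂⁽⁰'⁻ᵏ⁾, β̂⁽¹'⁻ᵏ⁾), the conditional variance of the fold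
estimator τ̂⁽ᵏ⁾ given the estimators is
V_k = Σ_w (1/n_w⁽ᵏ⁾)·Var[Y⁽ʷ⁾ − X·β̂̄⁽⁻ᵏ⁾ | β̂⁽⁻ᵏ⁾]. -/
theorem stmt_10 {Ω : Type*} [MeasurableSpace Ω] (μ : Measure Ω) [IsProbabilityMeasure μ]
    (nk p : ℕ) (w : Fin nk → Fin 2)
    (nw : Fin 2 → ℕ) (hnw : ∀ g, nw g = (univ.filter fun i => w i = g).card)
    (hpos : ∀ g, 1 ≤ nw g)
    (X : Fin nk → Ω → Fin p → ℝ) (Y0 Y1 : Fin nk → Ω → ℝ)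
    (hXmeas : ∀ i, Measurable (X i))
    (hY0meas : ∀ i, Measurable (Y0 i)) (hY1meas : ∀ i, Measurable (Y1 i))
    -- the fold samples are i.i.d. with common law ν and finite second moments :
    (ν : Measure ((Fin p → ℝ) × ℝ × ℝ))
    (hlaw : ∀ i, μ.map (fun ω => (X i ω, Y0 i ω, Y1 i ω)) = ν)
    (hiid : iIndepFun (fun i ω => (X i ω, Y0 i ω, Y1 i ω)) μ)
    (hX2 : ∀ i j, MemLp (fun ω => X i ω j) 2 μ)
    (hY02 : ∀ i, MemLp (Y0 i) 2 μ) (hY12 : ∀ i, MemLp (Y1 i) 2 μ)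
    -- the estimators, independent of the fold samples :
    (bhat : Fin 2 → Ω → Fin p → ℝ) (hbhatmeas : ∀ g, Measurable (bhat g))
    (hbhat2 : ∀ g j, MemLp (fun ω => bhat g ω j) 2 μ)
    (hindep : IndepFun (fun ω => fun i => (X i ω, Y0 i ω, Y1 i ω))
      (fun ω => (bhat 0 ω, bhat 1 ω)) μ)
    -- observed outcomes and fold averages :
    (Y : Fin nk → Ω → ℝ) (hY : ∀ i ω, Y i ω = if w i = 1 then Y1 i ω else Y0 i ω)
    (Xbark : Ω → Fin p → ℝ) (hXbark : ∀ ω j, Xbark ω j = (∑ i, X i ω j) / nk)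
    (Xbarkw : Fin 2 → Ω → Fin p → ℝ)
    (hXbarkw : ∀ g ω j,
      Xbarkw g ω j = (∑ i ∈ univ.filter fun i => w i = g, X i ω j) / nw g)
    (Ybarkw : Fin 2 → Ω → ℝ)
    (hYbarkw : ∀ g ω, Ybarkw g ω = (∑ i ∈ univ.filter fun i => w i = g, Y i ω) / nw g)
    -- the fold estimator :
    (tauhatk : Ω → ℝ)
    (htauhatk : ∀ ω, tauhatk ω
      = Ybarkw 1 ω - Ybarkw 0 ω + (∑ j, (Xbark ω j - Xbarkw 1 ω j) * bhat 1 ω j)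
        - ∑ j, (Xbark ω j - Xbarkw 0 ω j) * bhat 0 ω j)
    -- V_k as a function of the estimators :
    (Vk : (Fin p → ℝ) → (Fin p → ℝ) → ℝ)
    (hVk : ∀ b0 b1, Vk b0 b1 = ∑ g : Fin 2, (1 / (nw g : ℝ))
      * variance (fun s : (Fin p → ℝ) × ℝ × ℝ =>
          (if g = 1 then s.2.2 else s.2.1)
            - ∑ j, s.1 j * (((nw 1 : ℝ) * b0 j + (nw 0 : ℝ) * b1 j) / nk)) ν) :
    -- conclusion : the conditional variance of τ̂⁽ᵏ⁾ given (β̂⁽⁰⁾, β̂⁽¹⁾) equals V_k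
    μ[fun ω => (tauhatk ω
        - (μ[tauhatk | MeasurableSpace.comap (fun ω' => (bhat 0 ω', bhat 1 ω')) inferInstance]) ω) ^ 2
      | MeasurableSpace.comap (fun ω' => (bhat 0 ω', bhat 1 ω')) inferInstance]
      =ᵐ[μ] fun ω => Vk (bhat 0 ω) (bhat 1 ω) := by
  set S : Ω → Fin nk → (Fin p → ℝ) × ℝ × ℝ := fun ω i => (X i ω, Y0 i ω, Y1 i ω)
  set B : Ω → (Fin p → ℝ) × (Fin p → ℝ) := fun ω => (bhat 0 ω, bhat 1 ω)
  have hZ (i : Fin nk) : Measurable fun ω => (X i ω, Y0 i ω, Y1 i ω) :=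
    (hXmeas i).prodMk ((hY0meas i).prodMk (hY1meas i))
  have hS : Measurable S := measurable_pi_lambda _ hZ
  have hB : Measurable B := (hbhatmeas 0).prodMk (hbhatmeas 1)
  have hτ : tauhatk = fun ω => foldContrast w nw nk (S ω) (B ω) := by
    funext ω
    have h := fold_estimator_eq_sum_armWeight_mul w hnw hpos (fun i => Y i ω) (X · ω) (B ω)
    rw [Fintype.card_fin] at h
    rw [htauhatk, hYbarkw, hYbarkw]
    simp only [hXbark, hXbarkw]
    refine h.trans (sum_congr rfl fun i _ => ?_)
    rw [hY]
    rfl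
  have hL2 : MemLp (fun ω => foldContrast w nw nk (S ω) (B ω)) 2 μ :=
    memLp_foldContrast w nk hindep hX2 hY02 hY12 (hbhat2 0) (hbhat2 1)
  have hVar (b : (Fin p → ℝ) × (Fin p → ℝ)) :
      Var[fun s => foldContrast w nw nk s b; μ.map S] = Vk b.1 b.2 := by
    rw [variance_map (measurable_foldContrast w nk).of_uncurry_right.aemeasurable
      hS.aemeasurable, hVk]
    exact variance_foldContrast w hnw hiid hZ hlaw hX2 hY02 hY12 nk b
  rw [hτ]
  -- the goal is `Var[foldContrast …; μ | σ(B)]` with `condVar` unfolded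
  exact (hindep.condVar_comp_ae_eq_variance_map hS hB (measurable_foldContrast w nk) hL2).trans
    (ae_of_all _ fun ω => hVar (B ω))
end

section
/- Fix a treatment assignment W₁, …, Wₙ ∈ {0,1} with n₀, n₁ ≥ 1, arbitrary real-valued functions μ^(0), μ^(1) on ℝ^p, and for each i arbitrary predictions μ̂^{(0,−i)}(X_i), μ̂^{(1,−i)}(X_i) ∈ ℝ. Then the non-parametric adjusted estimator τ̂ decomposes as τ̂ = (1/n₁)Σ_{W_i=1}(Y_i − μ^(1)(X_i)) − (1/n₀)Σ_{W_i=0}(Y_i − μ^(0)(X_i)) + (1/n)Σ_{i=1}^n (μ^(1)(X_i) − μ^(0)(X_i)) + R, where R = Σ_{i=1}^n ((−1)^{W_i}/n_{W_i})·[(n₀/n)(μ̂^{(1,−i)}(X_i) − μ^(1)(X_i)) + (n₁/n)(μ̂^{(0,−i)}(X_i) − μ^(0)(X_i))]. -/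
/-!
The identity holds unit by unit. Writing `a = μ̂⁽¹'⁻ⁱ⁾ - μ⁽¹⁾` and `b = μ̂⁽⁰'⁻ⁱ⁾ - μ⁽⁰⁾`, a treated
unit contributes `(a - b)/n - a/n₁` to `τ̂` minus the oracle terms and `-(n₀ a/n + n₁ b/n)/n₁`
to `R`; these agree because `n = n₀ + n₁` and `n₁ ≠ 0`, the unit itself being counted in `n₁`.
Symmetrically for controls.
-/

open Finset

theorem card_filter_eq_zero_add_card_filter_eq_one {ι : Type*} [Fintype ι] (W : ι → Fin 2) :
    #{i | W i = 0} + #{i | W i = 1} = Fintype.card ι := by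
  have hone : univ.filter (W · = 1) = univ.filter (¬W · = 0) :=
    filter_congr fun i _ => by generalize W i = w; decide +revert
  rw [hone, card_filter_add_card_filter_not, card_univ]

theorem adjusted_estimator_decomposition {ι : Type*} [Fintype ι] (W : ι → Fin 2) (Y : ι → ℝ)
    (m mhat : Fin 2 → ι → ℝ) :
    (∑ i, (mhat 1 i - mhat 0 i)) / Fintype.card ι
        + (∑ i with W i = 1, (Y i - mhat 1 i)) / #{i | W i = 1}
        - (∑ i with W i = 0, (Y i - mhat 0 i)) / #{i | W i = 0}
      = (∑ i with W i = 1, (Y i - m 1 i)) / #{i | W i = 1}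
        - (∑ i with W i = 0, (Y i - m 0 i)) / #{i | W i = 0}
        + (∑ i, (m 1 i - m 0 i)) / Fintype.card ι
        + ∑ i, ((-1 : ℝ) ^ (W i : ℕ) / #{j | W j = W i})
          * ((#{j | W j = 0} / Fintype.card ι : ℝ) * (mhat 1 i - m 1 i)
            + (#{j | W j = 1} / Fintype.card ι : ℝ) * (mhat 0 i - m 0 i)) := by
  rw [← sub_eq_zero, ← card_filter_eq_zero_add_card_filter_eq_one W]
  simp only [sum_filter, sum_div, ← sum_sub_distrib, ← sum_add_distrib]
  refine sum_eq_zero fun i _ => ?_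
  have hpos : (0 : ℝ) < #{j | W j = W i} := by exact_mod_cast card_pos.mpr ⟨i, by simp⟩
  obtain hw | hw : W i = 0 ∨ W i = 1 := by omega
  all_goals
    rw [hw] at hpos ⊢
    simp only [Nat.cast_add, reduceIte, zero_ne_one, one_ne_zero, Fin.val_zero, Fin.val_one,
      pow_zero, pow_one, zero_div, add_zero, sub_zero, zero_sub]
    field_simp
    ring

theorem stmt_13_general (n p : ℕ) (X : Fin n → Fin p → ℝ) (Y : Fin n → ℝ) (W : Fin n → Fin 2)
    (mu : Fin 2 → (Fin p → ℝ) → ℝ)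
    (muhat : Fin 2 → Fin n → ℝ)  -- muhat w i = μ̂⁽ʷ'⁻ⁱ⁾(Xᵢ)
    (nw : Fin 2 → ℕ) (hnw : ∀ w, nw w = (univ.filter fun i => W i = w).card)
    (tauhat : ℝ)
    (htauhat : tauhat
      = (∑ i, (muhat 1 i - muhat 0 i)) / n
        + (∑ i ∈ univ.filter fun i => W i = 1, (Y i - muhat 1 i)) / nw 1
        - (∑ i ∈ univ.filter fun i => W i = 0, (Y i - muhat 0 i)) / nw 0)
    (R : ℝ)
    (hR : R = ∑ i, ((-1 : ℝ) ^ (W i : ℕ) / nw (W i))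
      * (((nw 0 : ℝ) / n) * (muhat 1 i - mu 1 (X i))
        + ((nw 1 : ℝ) / n) * (muhat 0 i - mu 0 (X i)))) :
    tauhat
      = (∑ i ∈ univ.filter fun i => W i = 1, (Y i - mu 1 (X i))) / nw 1
        - (∑ i ∈ univ.filter fun i => W i = 0, (Y i - mu 0 (X i))) / nw 0
        + (∑ i, (mu 1 (X i) - mu 0 (X i))) / n
        + R := by
  subst htauhat hR
  simp only [hnw]
  simpa only [Fintype.card_fin] using
    adjusted_estimator_decomposition W Y (fun w i => mu w (X i)) muhat

/-- Algebraic decomposition of the non-parametric adjusted estimator: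
τ̂ = (1/n₁)Σ_{Wᵢ=1}(Yᵢ − μ⁽¹⁾(Xᵢ)) − (1/n₀)Σ_{Wᵢ=0}(Yᵢ − μ⁽⁰⁾(Xᵢ))
    + (1/n)Σᵢ(μ⁽¹⁾(Xᵢ) − μ⁽⁰⁾(Xᵢ)) + R,
where R = Σᵢ ((−1)^{Wᵢ}/n_{Wᵢ})·[(n₀/n)(μ̂⁽¹'⁻ⁱ⁾(Xᵢ) − μ⁽¹⁾(Xᵢ))
          + (n₁/n)(μ̂⁽⁰'⁻ⁱ⁾(Xᵢ) − μ⁽⁰⁾(Xᵢ))]. -/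
theorem stmt_13 (n p : ℕ) (X : Fin n → Fin p → ℝ) (Y : Fin n → ℝ) (W : Fin n → Fin 2)
    (mu : Fin 2 → (Fin p → ℝ) → ℝ)
    (muhat : Fin 2 → Fin n → ℝ)  -- muhat w i = μ̂⁽ʷ'⁻ⁱ⁾(Xᵢ)
    (nw : Fin 2 → ℕ) (hnw : ∀ w, nw w = (univ.filter fun i => W i = w).card)
    (hpos : ∀ w, 1 ≤ nw w)
    (tauhat : ℝ)
    (htauhat : tauhat
      = (∑ i, (muhat 1 i - muhat 0 i)) / n
        + (∑ i ∈ univ.filter fun i => W i = 1, (Y i - muhat 1 i)) / nw 1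
        - (∑ i ∈ univ.filter fun i => W i = 0, (Y i - muhat 0 i)) / nw 0)
    (R : ℝ)
    (hR : R = ∑ i, ((-1 : ℝ) ^ (W i : ℕ) / nw (W i))
      * (((nw 0 : ℝ) / n) * (muhat 1 i - mu 1 (X i))
        + ((nw 1 : ℝ) / n) * (muhat 0 i - mu 0 (X i)))) :
    tauhat
      = (∑ i ∈ univ.filter fun i => W i = 1, (Y i - mu 1 (X i))) / nw 1
        - (∑ i ∈ univ.filter fun i => W i = 0, (Y i - mu 0 (X i))) / nw 0
        + (∑ i, (mu 1 (X i) - mu 0 (X i))) / n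
        + R :=
  stmt_13_general n p X Y W mu muhat nw hnw tauhat htauhat R hR
end
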